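/- For each κ let P_κ denote the orthogonal projection (with respect to the Frobenius inner product) of the n-qubit operator space onto B_κ, the span of products of κ distinct Jordan–Wigner Majorana operators. Then for all computational basis states, the module weights coincide: for all x, y : Fin n → Bool and all κ with 0 ≤ κ ≤ 2n, ‖P_κ(ρ_x)‖ = ‖P_κ(ρ_y)‖, where ρ_x = |x⟩⟨x| and ρ_y = |y⟩⟨y|. -/

import Mathlib

open Matrix

noncomputable section

/-- The 2×2 Pauli matrix `X`. -/
def σX : Matrix (Fin 2) (Fin 2) ℂ := !![0, 1; 1, 0]

/-- The 2×2 Pauli matrix `Y`. -/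
def σY : Matrix (Fin 2) (Fin 2) ℂ := !![0, -Complex.I; Complex.I, 0]

/-- The 2×2 Pauli matrix `Z`. -/
def σZ : Matrix (Fin 2) (Fin 2) ℂ := !![1, 0; 0, -1]

/-- The Kronecker product `P 0 ⊗ P 1 ⊗ ⋯ ⊗ P (n-1)` of `n` 2×2 complex matrices,
realized as a `2^n × 2^n` matrix; rows and columns are indexed by `Fin (2^n)`
via the equivalence `finFunctionFinEquiv : (Fin n → Fin 2) ≃ Fin (2^n)`, and the
entries are the products of the entries of the factors. -/
def pauliString (n : ℕ) (P : Fin n → Matrix (Fin 2) (Fin 2) ℂ) :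
    Matrix (Fin (2 ^ n)) (Fin (2 ^ n)) ℂ :=
  Matrix.of fun i j =>
    ∏ k : Fin n, P k ((finFunctionFinEquiv.symm i : Fin n → Fin 2) k)
      ((finFunctionFinEquiv.symm j : Fin n → Fin 2) k)

/-- The Jordan–Wigner Majorana operators on `n` qubits (with sites and Majorana
indices 0-indexed): for `a = 2μ` this is `Z^{⊗μ} ⊗ X ⊗ I^{⊗(n-μ-1)}` and for
`a = 2μ+1` it is `Z^{⊗μ} ⊗ Y ⊗ I^{⊗(n-μ-1)}`. -/
def majorana (n : ℕ) (a : Fin (2 * n)) : Matrix (Fin (2 ^ n)) (Fin (2 ^ n)) ℂ :=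
  pauliString n fun k =>
    if (k : ℕ) < (a : ℕ) / 2 then σZ
    else if (k : ℕ) = (a : ℕ) / 2 then (if (a : ℕ) % 2 = 0 then σX else σY)
    else 1

/-- `c_S`: the product of the Majorana operators `c_a` for `a ∈ S`, taken in
increasing order of the index `a`. -/
def majoranaProd (n : ℕ) (S : Finset (Fin (2 * n))) :
    Matrix (Fin (2 ^ n)) (Fin (2 ^ n)) ℂ :=
  ((S.sort (· ≤ ·)).map (majorana n)).prod

/-- `B_κ`: the complex linear span of the products of `κ` distinct Jordan–Wigner
Majorana operators. -/
def BMod (n κ : ℕ) : Submodule ℂ (Matrix (Fin (2 ^ n)) (Fin (2 ^ n)) ℂ) :=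
  Submodule.span ℂ (majoranaProd n '' {S : Finset (Fin (2 * n)) | S.card = κ})

/-- The computational basis state `|x⟩` of `n` qubits, as a standard basis
vector of `ℂ^{2^n}`. -/
def ket (n : ℕ) (x : Fin n → Bool) : Fin (2 ^ n) → ℂ :=
  Pi.single (finFunctionFinEquiv fun i => if x i then 1 else 0) 1

/-- The matchgate generators on `n` qubits: the single-qubit operators
`Z_j = I^{⊗j} ⊗ Z ⊗ I^{⊗(n-j-1)}` and the two-qubit operators
`I^{⊗j} ⊗ P ⊗ P' ⊗ I^{⊗(n-j-2)}` with `P, P' ∈ {X, Y}` on adjacent qubits. -/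
def matchgateGens (n : ℕ) : Set (Matrix (Fin (2 ^ n)) (Fin (2 ^ n)) ℂ) :=
  {G | (∃ j : Fin n, G = pauliString n fun k => if k = j then σZ else 1) ∨
    (∃ j : ℕ, j + 1 < n ∧ ∃ P P' : Matrix (Fin 2) (Fin 2) ℂ,
      (P = σX ∨ P = σY) ∧ (P' = σX ∨ P' = σY) ∧
      G = pauliString n fun k =>
        if (k : ℕ) = j then P else if (k : ℕ) = j + 1 then P' else 1)}

/-- The Hilbert–Schmidt (Frobenius) norm of a matrix, induced by the inner
product `⟨A, B⟩ = Tr(Aᴴ B)`. -/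
def hsNorm {N : ℕ} (A : Matrix (Fin N) (Fin N) ℂ) : ℝ :=
  Real.sqrt ((Aᴴ * A).trace.re)

/-- `P` is the orthogonal projection onto the subspace `B` of the operator space,
with respect to the Frobenius inner product `⟨A, C⟩ = Tr(Aᴴ C)`: every value of `P`
lies in `B`, and `A - P A` is orthogonal to `B`. -/
def IsHSOrthogonalProjection {N : ℕ} (B : Submodule ℂ (Matrix (Fin N) (Fin N) ℂ))
    (P : Matrix (Fin N) (Fin N) ℂ →ₗ[ℂ] Matrix (Fin N) (Fin N) ℂ) : Prop :=
  (∀ A, P A ∈ B) ∧ ∀ A, ∀ C ∈ B, ((A - P A)ᴴ * C).trace = 0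

/-!
Conjugation by the Majorana operator `c_{2μ} = Z^{⊗μ} ⊗ X ⊗ I^{⊗(n-μ-1)}` maps `ρ_x` to `ρ_{x'}`,
where `x'` is `x` with bit `μ` flipped: site by site, `Z` fixes `|b⟩⟨b|` and `X` swaps the two
projectors. Since `c_{2μ}` commutes or anticommutes with every Majorana operator, it maps each
`c_S` to `±c_S` and hence preserves every `B_κ`. Being Hermitian, it therefore commutes with the
orthogonal projection `P_κ`, and being also an involution it preserves the Hilbert–Schmidt norm.
Flipping bits one at a time connects any two computational basis states.
-/

section Projection

variable {N : ℕ} {B : Submodule ℂ (Matrix (Fin N) (Fin N) ℂ)}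
  {P : Matrix (Fin N) (Fin N) ℂ →ₗ[ℂ] Matrix (Fin N) (Fin N) ℂ}

open scoped ComplexOrder in
lemma IsHSOrthogonalProjection.apply_eq (hP : IsHSOrthogonalProjection B P)
    {A b : Matrix (Fin N) (Fin N) ℂ} (hb : b ∈ B) (hAb : ∀ C ∈ B, ((A - b)ᴴ * C).trace = 0) :
    P A = b := by
  have hdiff : P A - b ∈ B := sub_mem (hP.1 A) hb
  have hzero : ((P A - b)ᴴ * (P A - b)).trace = 0 := by
    nth_rw 1 [show P A - b = (A - b) - (A - P A) by abel]
    rw [Matrix.conjTranspose_sub, Matrix.sub_mul, Matrix.trace_sub, hAb _ hdiff, hP.2 A _ hdiff,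
      sub_zero]
  exact sub_eq_zero.mp (Matrix.trace_conjTranspose_mul_self_eq_zero_iff.mp hzero)

lemma trace_conjTranspose_conj_mul {c : Matrix (Fin N) (Fin N) ℂ} (hc : c.IsHermitian)
    (M C : Matrix (Fin N) (Fin N) ℂ) :
    ((c * M * c)ᴴ * C).trace = (Mᴴ * (c * C * c)).trace := by
  simp only [Matrix.conjTranspose_mul, hc.eq, Matrix.mul_assoc]
  rw [Matrix.trace_mul_comm c]
  simp only [Matrix.mul_assoc]

lemma IsHSOrthogonalProjection.map_conj (hP : IsHSOrthogonalProjection B P)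
    {c : Matrix (Fin N) (Fin N) ℂ} (hc : c.IsHermitian) (hB : ∀ M ∈ B, c * M * c ∈ B)
    (A : Matrix (Fin N) (Fin N) ℂ) : P (c * A * c) = c * P A * c := by
  refine hP.apply_eq (hB _ (hP.1 A)) fun C hC => ?_
  rw [← Matrix.sub_mul, ← Matrix.mul_sub, trace_conjTranspose_conj_mul hc]
  exact hP.2 A _ (hB C hC)

lemma hsNorm_conj {c : Matrix (Fin N) (Fin N) ℂ} (hc : c.IsHermitian) (hc2 : c * c = 1)
    (M : Matrix (Fin N) (Fin N) ℂ) : hsNorm (c * M * c) = hsNorm M := by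
  have hcc : c * (c * M * c) * c = M := by
    simp only [← Matrix.mul_assoc, hc2, Matrix.one_mul]
    rw [Matrix.mul_assoc, hc2, Matrix.mul_one]
  rw [hsNorm, trace_conjTranspose_conj_mul hc, hcc, hsNorm]

end Projection

lemma mul_list_prod_eq_or_eq_neg {R : Type*} [Ring R] {a : R} {L : List R}
    (h : ∀ b ∈ L, a * b = b * a ∨ a * b = -(b * a)) :
    a * L.prod = L.prod * a ∨ a * L.prod = -(L.prod * a) := by
  induction L with
  | nil => simp
  | cons b L ih =>
    rw [List.forall_mem_cons] at h
    simp only [List.prod_cons, ← mul_assoc]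
    rcases h.1 with hb | hb <;> rcases ih h.2 with hL | hL <;>
      simp [hb, mul_assoc, hL]

lemma apply_eq_of_forall_apply_update_not {ι α : Type*} [Fintype ι] [DecidableEq ι]
    {f : (ι → Bool) → α} (hf : ∀ x i, f (Function.update x i (!x i)) = f x) (x y : ι → Bool) :
    f x = f y := by
  suffices ∀ s : Finset ι, ∀ x, (∀ i ∉ s, x i = y i) → f x = f y from this .univ x (by simp)
  intro s
  induction s using Finset.induction_on with
  | empty => exact fun x hx => congrArg f (funext fun i => hx i (Finset.notMem_empty i))
  | insert a s _ ih =>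
    intro x hx
    have hy : f (Function.update x a (y a)) = f y := by
      refine ih _ fun i hi => ?_
      by_cases hia : i = a
      · simp [hia]
      · simp [hia, hx i (by simp [hia, hi])]
    rw [← hy]
    by_cases hxa : x a = y a
    · rw [← hxa, Function.update_eq_self]
    · rw [Bool.eq_not.mpr (Ne.symm hxa), hf]

namespace JordanWigner

section PauliMatrices

lemma σX_mul_self : σX * σX = 1 := by simp [σX, Matrix.one_fin_two]
lemma σY_mul_self : σY * σY = 1 := by simp [σY, Matrix.one_fin_two]
lemma σZ_mul_self : σZ * σZ = 1 := by simp [σZ, Matrix.one_fin_two]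
lemma σX_mul_σZ : σX * σZ = -(σZ * σX) := by simp [σX, σZ]
lemma σY_mul_σZ : σY * σZ = -(σZ * σY) := by simp [σY, σZ]
lemma σX_mul_σY : σX * σY = -(σY * σX) := by simp [σX, σY]

lemma isHermitian_σX : σX.IsHermitian := by
  ext i j; fin_cases i <;> fin_cases j <;> simp [σX]
lemma isHermitian_σY : σY.IsHermitian := by
  ext i j; fin_cases i <;> fin_cases j <;> simp [σY]
lemma isHermitian_σZ : σZ.IsHermitian := by
  ext i j; fin_cases i <;> fin_cases j <;> simp [σZ]

end PauliMatrices

section PauliString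

variable {n : ℕ}

lemma pauliString_mul (P Q : Fin n → Matrix (Fin 2) (Fin 2) ℂ) :
    pauliString n P * pauliString n Q = pauliString n fun k => P k * Q k := by
  ext i j
  simp only [pauliString, Matrix.mul_apply, Matrix.of_apply, Fintype.prod_sum]
  rw [← finFunctionFinEquiv.sum_comp]
  simp only [Equiv.symm_apply_apply, Finset.prod_mul_distrib]

lemma pauliString_one : pauliString n (fun _ => 1) = 1 := by
  ext i j
  simp [pauliString, Matrix.one_apply, Finset.prod_boole, ← funext_iff]

lemma pauliString_conjTranspose (P : Fin n → Matrix (Fin 2) (Fin 2) ℂ) :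
    (pauliString n P)ᴴ = pauliString n fun k => (P k)ᴴ := by
  ext i j
  simp [pauliString, Matrix.conjTranspose_apply]

lemma pauliString_smul (s : Fin n → ℂ) (P : Fin n → Matrix (Fin 2) (Fin 2) ℂ) :
    pauliString n (fun k => s k • P k) = (∏ k, s k) • pauliString n P := by
  ext i j
  simp [pauliString, Finset.prod_mul_distrib]

lemma pauliString_mul_eq_neg {P Q : Fin n → Matrix (Fin 2) (Fin 2) ℂ} (j : Fin n)
    (hj : P j * Q j = -(Q j * P j)) (hk : ∀ k ≠ j, Commute (P k) (Q k)) :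
    pauliString n P * pauliString n Q = -(pauliString n Q * pauliString n P) := by
  have hsite : (fun k => P k * Q k) = fun k => (if k = j then -1 else 1 : ℂ) • (Q k * P k) := by
    funext k
    split_ifs with h
    · subst h; simp [hj]
    · simp [(hk k h).eq]
  rw [pauliString_mul, pauliString_mul, hsite, pauliString_smul, Fintype.prod_ite_eq']
  simp

end PauliString

section Majorana

def jwFactor (a k : ℕ) : Matrix (Fin 2) (Fin 2) ℂ :=
  if k < a / 2 then σZ else if k = a / 2 then (if a % 2 = 0 then σX else σY) else 1

variable {n : ℕ}

lemma majorana_eq_pauliString (a : Fin (2 * n)) :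
    majorana n a = pauliString n fun k => jwFactor a k := rfl

lemma jwFactor_mul_self (a k : ℕ) : jwFactor a k * jwFactor a k = 1 := by
  unfold jwFactor
  split_ifs <;> simp [σX_mul_self, σY_mul_self, σZ_mul_self]

lemma isHermitian_jwFactor (a k : ℕ) : (jwFactor a k).IsHermitian := by
  unfold jwFactor
  split_ifs
  exacts [isHermitian_σZ, isHermitian_σX, isHermitian_σY, Matrix.isHermitian_one]

lemma jwFactor_anticommute {a b : ℕ} (hab : a < b) :
    jwFactor a (a / 2) * jwFactor b (a / 2) = -(jwFactor b (a / 2) * jwFactor a (a / 2)) := by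
  unfold jwFactor
  rcases (Nat.div_le_div_right (c := 2) hab.le).eq_or_lt with h | h
  · have ha : a % 2 = 0 := by omega
    have hb : b % 2 = 1 := by omega
    simp [← h, ha, hb, σX_mul_σY]
  · split_ifs <;> simp_all [σX_mul_σZ, σY_mul_σZ]

lemma jwFactor_commute {a b k : ℕ} (hab : a < b) (hk : k ≠ a / 2) :
    Commute (jwFactor a k) (jwFactor b k) := by
  have hdiv : a / 2 ≤ b / 2 := Nat.div_le_div_right hab.le
  unfold jwFactor
  rcases hk.lt_or_gt with hk | hk
  · simp [hk, hk.trans_le hdiv]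
  · simp [hk.not_gt, hk.ne']

lemma majorana_mul_self (a : Fin (2 * n)) : majorana n a * majorana n a = 1 := by
  simp only [majorana_eq_pauliString, pauliString_mul, jwFactor_mul_self, pauliString_one]

lemma isHermitian_majorana (a : Fin (2 * n)) : (majorana n a).IsHermitian := by
  simp only [Matrix.IsHermitian, majorana_eq_pauliString, pauliString_conjTranspose,
    (isHermitian_jwFactor _ _).eq]

lemma majorana_anticommute_of_lt {a b : Fin (2 * n)} (hab : a < b) :
    majorana n a * majorana n b = -(majorana n b * majorana n a) :=
  pauliString_mul_eq_neg ⟨a / 2, by omega⟩ (jwFactor_anticommute hab)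
    fun _ hk => jwFactor_commute hab fun h => hk (Fin.ext h)

lemma majorana_anticommute {a b : Fin (2 * n)} (hab : a ≠ b) :
    majorana n a * majorana n b = -(majorana n b * majorana n a) := by
  rcases hab.lt_or_gt with h | h
  · exact majorana_anticommute_of_lt h
  · rw [majorana_anticommute_of_lt h, neg_neg]

end Majorana

section BMod

variable {n : ℕ}

lemma majorana_conj_majoranaProd (a : Fin (2 * n)) (S : Finset (Fin (2 * n))) :
    majorana n a * majoranaProd n S * majorana n a = majoranaProd n S ∨
      majorana n a * majoranaProd n S * majorana n a = -majoranaProd n S := by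
  have hcomm : ∀ M ∈ (S.sort (· ≤ ·)).map (majorana n),
      majorana n a * M = M * majorana n a ∨ majorana n a * M = -(M * majorana n a) := by
    simp only [List.mem_map]
    rintro _ ⟨b, -, rfl⟩
    by_cases hab : a = b
    · exact .inl (hab ▸ rfl)
    · exact .inr (majorana_anticommute hab)
  rcases mul_list_prod_eq_or_eq_neg hcomm with h | h <;>
    simp [majoranaProd, h, mul_assoc, majorana_mul_self]

lemma majorana_conj_mem_BMod (κ : ℕ) (a : Fin (2 * n))
    {M : Matrix (Fin (2 ^ n)) (Fin (2 ^ n)) ℂ} (hM : M ∈ BMod n κ) :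
    majorana n a * M * majorana n a ∈ BMod n κ := by
  induction hM using Submodule.span_induction with
  | mem _ hx =>
    obtain ⟨S, hS, rfl⟩ := hx
    have hmem : majoranaProd n S ∈ BMod n κ := Submodule.subset_span ⟨S, hS, rfl⟩
    rcases majorana_conj_majoranaProd a S with h | h <;> rw [h]
    exacts [hmem, neg_mem hmem]
  | zero => simp
  | add _ _ _ _ hx hy => simpa [mul_add, add_mul] using add_mem hx hy
  | smul c _ _ hx => simpa using Submodule.smul_mem _ c hx

end BMod

section BasisStates

def qubitProj : Bool → Matrix (Fin 2) (Fin 2) ℂ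
  | false => !![1, 0; 0, 0]
  | true => !![0, 0; 0, 1]

lemma qubitProj_apply (b : Bool) (u v : Fin 2) :
    qubitProj b u v = if u = (if b then 1 else 0) ∧ v = (if b then 1 else 0) then 1 else 0 := by
  cases b <;> fin_cases u <;> fin_cases v <;> rfl

lemma σZ_conj_qubitProj (b : Bool) : σZ * qubitProj b * σZ = qubitProj b := by
  cases b <;> simp [σZ, qubitProj, funext_iff, Fin.forall_fin_two]

lemma σX_conj_qubitProj (b : Bool) : σX * qubitProj b * σX = qubitProj (!b) := by
  cases b <;> simp [σX, qubitProj, funext_iff, Fin.forall_fin_two]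

variable {n : ℕ}

lemma vecMulVec_ket (x : Fin n → Bool) :
    vecMulVec (ket n x) (star (ket n x)) = pauliString n fun k => qubitProj (x k) := by
  have hsymm (l : Fin (2 ^ n)) : (∀ k, finFunctionFinEquiv.symm l k = if x k then 1 else 0) ↔
      l = finFunctionFinEquiv fun k => if x k then 1 else 0 := by
    rw [← funext_iff, Equiv.symm_apply_eq]
  ext i j
  simp only [ket, vecMulVec_apply, Pi.star_apply, pauliString, Matrix.of_apply, qubitProj_apply,
    Fintype.prod_boole, forall_and, hsymm, Pi.single_apply]
  split_ifs <;> simp_all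

lemma majorana_conj_vecMulVec_ket (μ : Fin n) (x : Fin n → Bool) :
    majorana n ⟨2 * μ, by omega⟩ * vecMulVec (ket n x) (star (ket n x)) *
        majorana n ⟨2 * μ, by omega⟩ =
      vecMulVec (ket n (Function.update x μ (!x μ)))
        (star (ket n (Function.update x μ (!x μ)))) := by
  simp only [vecMulVec_ket, majorana_eq_pauliString, pauliString_mul]
  congr 1
  funext k
  rcases lt_trichotomy k μ with h | rfl | h
  · simp [jwFactor, h, h.ne, σZ_conj_qubitProj]
  · simp [jwFactor, σX_conj_qubitProj]
  · simp [jwFactor, Fin.val_injective.ne h.ne', h.not_gt, Function.update_of_ne h.ne']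

end BasisStates

end JordanWigner

open JordanWigner in
theorem computational_basis_module_weights_eq (n : ℕ)
    (P : ℕ → (Matrix (Fin (2 ^ n)) (Fin (2 ^ n)) ℂ →ₗ[ℂ] Matrix (Fin (2 ^ n)) (Fin (2 ^ n)) ℂ))
    (hP : ∀ κ, IsHSOrthogonalProjection (BMod n κ) (P κ)) :
    ∀ (x y : Fin n → Bool) (κ : ℕ), κ ≤ 2 * n →
      hsNorm (P κ (vecMulVec (ket n x) (star (ket n x)))) =
        hsNorm (P κ (vecMulVec (ket n y) (star (ket n y)))) := by
  intro x y κ _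
  refine apply_eq_of_forall_apply_update_not
    (f := fun x => hsNorm (P κ (vecMulVec (ket n x) (star (ket n x))))) (fun x μ => ?_) x y
  have hc := isHermitian_majorana (n := n) ⟨2 * μ, by omega⟩
  rw [← majorana_conj_vecMulVec_ket, (hP κ).map_conj hc fun _ => majorana_conj_mem_BMod κ _,
    hsNorm_conj hc (majorana_mul_self _)]
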